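/- Let τ, α > 0 and ν = 1, and let F_{τ,α,1}(θ) = (1/B(α,1)) ∫₀¹ ((1-δ)/(1-δ cos θ))^τ δ^{α-1} dδ. Then for every a ∈ (0,2] there is no constant b > 0 such that lim_{θ → 0+} (F_{τ,α,1}(0) - F_{τ,α,1}(θ)) / θ^a = b; that is, the fractal index of F_{τ,α,1} does not exist. More precisely, the limit of (F_{τ,α,1}(0) - F_{τ,α,1}(θ))/θ^a as θ → 0+ is 0 for every a ∈ (0,2) and is +∞ for a = 2. -/

import Mathlib

/-!
For `ν = 1` the normalising constant is `1 / B(α, 1) = α` and `F(0) = 1`. With `e = 1 - cos θ`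
the kernel is `(1 - δ) / (1 - δ cos θ) = (1 + x)⁻¹`, `x = δ e / (1 - δ)`, so
`F(0) - F(θ) = α ∫₀¹ (1 - (1 + x)^(-τ)) δ^(α-1) dδ`.

Upper bound: `1 - (1 + x)^(-τ) ≤ min 1 (τ x) ≤ (τ x)^s` for `s ≤ 1`, and `δ^(α-1) (1 - δ)^(-s)`
is integrable for `s < 1`; hence `F(0) - F(θ) = O(e^s) = O(θ^(2s))`, which is `o(θ^a)` once
`a < 2s < 2`.

Lower bound: for `1/2 < δ < 1 - e` we have `x ≤ 1`, where `1 - (1 + x)^(-τ)` is comparable to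
`x ≍ e / (1 - δ)`. Integrating `e / (1 - δ)` over `(1/2, 1 - e)` gives `e log (1 / (2e))`, so
`F(0) - F(θ) ≳ θ² log (1/θ)` and the quotient by `θ²` tends to `+∞`.
-/

open Real MeasureTheory Filter

/-- Euler Beta function `B(a,b) = Γ(a)Γ(b)/Γ(a+b)`. -/
noncomputable def betaFn (a b : ℝ) : ℝ := Real.Gamma a * Real.Gamma b / Real.Gamma (a + b)

/-- The `F`-family correlation function. -/
noncomputable def Ffam (τ α ν θ : ℝ) : ℝ :=
  (1 / betaFn α ν) * ∫ δ in Set.Ioo (0:ℝ) 1,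
    ((1 - δ) / (1 - δ * Real.cos θ)) ^ τ * δ ^ (α - 1) * (1 - δ) ^ (ν - 1)

open Set Topology

lemma one_add_rpow_neg_mem_Icc {t x : ℝ} (ht : 0 ≤ t) (hx : 0 ≤ x) :
    (1 + x) ^ (-t) ∈ Icc 0 1 :=
  ⟨rpow_nonneg (by linarith) _, rpow_le_one_of_one_le_of_nonpos (by linarith) (by linarith)⟩

lemma one_sub_one_add_rpow_neg_le {t x : ℝ} (ht : 0 ≤ t) (hx : 0 ≤ x) :
    1 - (1 + x) ^ (-t) ≤ t * x := by
  have hlog : log (1 + x) ≤ x := by linarith [log_le_sub_one_of_pos (by linarith : 0 < 1 + x)]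
  rw [rpow_def_of_pos (by linarith)]
  nlinarith [add_one_le_exp (log (1 + x) * -t), mul_le_mul_of_nonneg_left hlog ht]

lemma one_sub_one_add_rpow_neg_le_rpow {t x s : ℝ} (ht : 0 ≤ t) (hx : 0 ≤ x) (hs0 : 0 ≤ s)
    (hs1 : s ≤ 1) :
    1 - (1 + x) ^ (-t) ≤ (t * x) ^ s := by
  obtain ⟨h0, h1⟩ := one_add_rpow_neg_mem_Icc ht hx
  calc 1 - (1 + x) ^ (-t) ≤ (1 - (1 + x) ^ (-t)) ^ s :=
        self_le_rpow_of_le_one (by linarith) (by linarith) hs1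
    _ ≤ (t * x) ^ s := rpow_le_rpow (by linarith) (one_sub_one_add_rpow_neg_le ht hx) hs0

lemma mul_le_one_sub_one_add_rpow_neg {t x : ℝ} (ht : 0 ≤ t) (hx : 0 ≤ x) (hx1 : x ≤ 1) :
    t / (2 + t) * x ≤ 1 - (1 + x) ^ (-t) := by
  set y := t * log (1 + x)
  have hlog : x / 2 ≤ log (1 + x) := by
    refine le_trans ?_ (le_log_one_add_of_nonneg hx)
    rw [div_le_div_iff₀ (by norm_num) (by linarith)]
    nlinarith
  have hy0 : 0 ≤ y := mul_nonneg ht (log_nonneg (by linarith))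
  have hy : t * x ≤ 2 * y := by nlinarith [mul_le_mul_of_nonneg_left hlog ht]
  have hexp : (1 + x) ^ (-t) ≤ (1 + y)⁻¹ := by
    rw [rpow_def_of_pos (by linarith), show log (1 + x) * -t = -y by ring, exp_neg]
    exact inv_anti₀ (by positivity) (by linarith [add_one_le_exp y])
  calc t / (2 + t) * x ≤ y / (1 + y) := by
        rw [div_mul_eq_mul_div, div_le_div_iff₀ (by linarith) (by linarith)]
        nlinarith [mul_le_mul_of_nonneg_left hx1 (mul_nonneg ht hy0)]
    _ = 1 - (1 + y)⁻¹ := by field_simp; ring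
    _ ≤ 1 - (1 + x) ^ (-t) := sub_le_sub_left hexp 1

lemma intervalIntegrable_rpow_mul_one_sub_rpow_zero_half {p q : ℝ} (hp : -1 < p) :
    IntervalIntegrable (fun x : ℝ => x ^ p * (1 - x) ^ q) volume 0 (1 / 2) := by
  refine (intervalIntegral.intervalIntegrable_rpow' hp).mul_continuousOn
    (ContinuousOn.rpow_const (by fun_prop) fun x hx => Or.inl ?_)
  rw [uIcc_of_le (by norm_num)] at hx
  linarith [hx.2]

lemma integrableOn_rpow_mul_one_sub_rpow {p q : ℝ} (hp : -1 < p) (hq : -1 < q) :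
    IntegrableOn (fun x : ℝ => x ^ p * (1 - x) ^ q) (Ioo 0 1) := by
  have hright : IntervalIntegrable (fun x : ℝ => x ^ p * (1 - x) ^ q) volume (1 / 2) 1 := by
    have := ((intervalIntegrable_rpow_mul_one_sub_rpow_zero_half (q := p) hq).comp_sub_left 1).symm
    simpa only [sub_sub_cancel, sub_zero, mul_comm, show (1 : ℝ) - 1 / 2 = 1 / 2 by norm_num]
      using this
  rw [← intervalIntegrable_iff_integrableOn_Ioo_of_le zero_le_one]
  exact (intervalIntegrable_rpow_mul_one_sub_rpow_zero_half hp).trans hright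

lemma integrableOn_rpow_sub_one {α : ℝ} (hα : 0 < α) :
    IntegrableOn (fun δ : ℝ => δ ^ (α - 1)) (Ioo 0 1) := by
  rw [← intervalIntegrable_iff_integrableOn_Ioo_of_le zero_le_one]
  exact intervalIntegral.intervalIntegrable_rpow' (by linarith)

lemma integrableOn_mul_rpow_sub_one {α : ℝ} (hα : 0 < α) {f : ℝ → ℝ} (hf : Measurable f)
    (hf1 : ∀ δ ∈ Ioo (0 : ℝ) 1, f δ ∈ Icc 0 1) :
    IntegrableOn (fun δ => f δ * δ ^ (α - 1)) (Ioo 0 1) := by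
  refine (integrableOn_rpow_sub_one hα).bdd_mul (c := 1) hf.aestronglyMeasurable ?_
  filter_upwards [ae_restrict_mem measurableSet_Ioo] with δ hδ
  rw [norm_of_nonneg (hf1 δ hδ).1]
  exact (hf1 δ hδ).2

lemma setIntegral_Ioo_rpow_sub_one {α : ℝ} (hα : 0 < α) :
    ∫ δ in Ioo (0 : ℝ) 1, δ ^ (α - 1) = 1 / α := by
  rw [← integral_Ioc_eq_integral_Ioo, ← intervalIntegral.integral_of_le zero_le_one,
    integral_rpow (Or.inl (by linarith)), sub_add_cancel, one_rpow, zero_rpow hα.ne', sub_zero]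

lemma one_div_betaFn_one {α : ℝ} (hα : 0 < α) : 1 / betaFn α 1 = α := by
  rw [betaFn, Real.Gamma_one, Real.Gamma_add_one hα.ne']
  field_simp [(Real.Gamma_pos_of_pos hα).ne']

lemma setIntegral_Ioo_inv_one_sub {e : ℝ} (he0 : 0 < e) (he : e ≤ 1 / 2) :
    ∫ δ in Ioo (1 / 2 : ℝ) (1 - e), (1 - δ)⁻¹ = log (1 / 2 / e) := by
  rw [← integral_Ioc_eq_integral_Ioo, ← intervalIntegral.integral_of_le (by linarith),
    intervalIntegral.integral_comp_sub_left (fun x => x⁻¹), sub_sub_cancel,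
    integral_inv_of_pos he0 (by norm_num)]
  norm_num

lemma tendsto_one_sub_cos_nhdsGT_zero : Tendsto (fun θ : ℝ => 1 - cos θ) (𝓝[>] 0) (𝓝[>] 0) := by
  refine tendsto_nhdsWithin_of_tendsto_nhds_of_eventually_within _ ?_ ?_
  · have h := (continuous_cos.tendsto (0 : ℝ)).const_sub 1
    rw [cos_zero, sub_self] at h
    exact h.mono_left nhdsWithin_le_nhds
  · filter_upwards [Ioo_mem_nhdsGT pi_pos] with θ hθ
    have := cos_le_one_sub_mul_cos_sq (abs_le.2 ⟨by linarith [hθ.1, pi_pos], hθ.2.le⟩)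
    have : 0 < 2 / π ^ 2 * θ ^ 2 := by have := hθ.1; positivity
    simp only [mem_Ioi]
    linarith

lemma tendsto_div_rpow_nhdsGT_zero_of_le {f : ℝ → ℝ} {C p a : ℝ} (hap : a < p)
    (hf0 : ∀ θ, 0 < θ → 0 ≤ f θ) (hf : ∀ θ, 0 < θ → f θ ≤ C * θ ^ p) :
    Tendsto (fun θ => f θ / θ ^ a) (𝓝[>] 0) (𝓝 0) := by
  have hlim : Tendsto (fun θ : ℝ => C * θ ^ (p - a)) (𝓝[>] 0) (𝓝 0) := by
    have := ((continuousAt_rpow_const 0 (p - a) (Or.inr (by linarith))).tendsto.mono_left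
      (nhdsWithin_le_nhds (s := Ioi 0))).const_mul C
    rwa [zero_rpow (by linarith), mul_zero] at this
  refine squeeze_zero' ?_ ?_ hlim <;> filter_upwards [self_mem_nhdsWithin] with θ (hθ : 0 < θ)
  · exact div_nonneg (hf0 θ hθ) (rpow_nonneg hθ.le a)
  · rw [rpow_sub hθ, ← mul_div_assoc]
    exact div_le_div_of_nonneg_right (hf θ hθ) (rpow_nonneg hθ.le a)

/-- `(F(0) - F(θ)) / α` for `ν = 1`, as a function of `e = 1 - cos θ` (see `Ffam_zero_sub_Ffam`). -/
noncomputable def ffamDefect (τ α e : ℝ) : ℝ :=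
  ∫ δ in Ioo (0 : ℝ) 1, (1 - (1 + δ * e / (1 - δ)) ^ (-τ)) * δ ^ (α - 1)

section Ffam

variable {τ α e δ : ℝ}

lemma mul_div_one_sub_nonneg (he : 0 ≤ e) (hδ : δ ∈ Ioo (0 : ℝ) 1) : 0 ≤ δ * e / (1 - δ) :=
  div_nonneg (mul_nonneg hδ.1.le he) (by linarith [hδ.2])

lemma Ffam_kernel_rpow_eq (τ θ : ℝ) (hδ : δ ∈ Ioo (0 : ℝ) 1) :
    ((1 - δ) / (1 - δ * cos θ)) ^ τ = (1 + δ * (1 - cos θ) / (1 - δ)) ^ (-τ) := by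
  have h1 : 0 < 1 - δ := by linarith [hδ.2]
  have h2 : 0 < 1 - δ * cos θ := by nlinarith [cos_le_one θ, hδ.1]
  have hx := mul_div_one_sub_nonneg (sub_nonneg.2 (cos_le_one θ)) hδ
  have hinv : (1 - δ) / (1 - δ * cos θ) = (1 + δ * (1 - cos θ) / (1 - δ))⁻¹ := by
    rw [← inv_div, inv_inj]
    field_simp
    ring
  rw [hinv, inv_rpow (by linarith), ← rpow_neg (by linarith)]

lemma Ffam_one_eq (hα : 0 < α) (θ : ℝ) :
    Ffam τ α 1 θ =
      α * ∫ δ in Ioo (0 : ℝ) 1, (1 + δ * (1 - cos θ) / (1 - δ)) ^ (-τ) * δ ^ (α - 1) := by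
  rw [Ffam, one_div_betaFn_one hα]
  congr 1
  refine setIntegral_congr_fun measurableSet_Ioo fun δ hδ => ?_
  rw [sub_self, rpow_zero, mul_one, Ffam_kernel_rpow_eq τ θ hδ]

lemma Ffam_one_zero (hα : 0 < α) : Ffam τ α 1 0 = 1 := by
  simp only [Ffam_one_eq hα, cos_zero, sub_self, mul_zero, zero_div, add_zero, one_rpow, one_mul,
    setIntegral_Ioo_rpow_sub_one hα, mul_one_div_cancel hα.ne']

lemma Ffam_zero_sub_Ffam (hτ : 0 ≤ τ) (hα : 0 < α) (θ : ℝ) :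
    Ffam τ α 1 0 - Ffam τ α 1 θ = α * ffamDefect τ α (1 - cos θ) := by
  have hker := integrableOn_mul_rpow_sub_one hα (by fun_prop) fun δ hδ =>
    one_add_rpow_neg_mem_Icc hτ (mul_div_one_sub_nonneg (sub_nonneg.2 (cos_le_one θ)) hδ)
  rw [Ffam_one_zero hα, Ffam_one_eq hα, ffamDefect]
  simp only [sub_mul, one_mul]
  rw [integral_sub (integrableOn_rpow_sub_one hα) hker, setIntegral_Ioo_rpow_sub_one hα, mul_sub,
    mul_one_div_cancel hα.ne']

lemma ffamDefect_integrand_nonneg (hτ : 0 ≤ τ) (he : 0 ≤ e) (hδ : δ ∈ Ioo (0 : ℝ) 1) :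
    0 ≤ (1 - (1 + δ * e / (1 - δ)) ^ (-τ)) * δ ^ (α - 1) :=
  mul_nonneg (sub_nonneg.2 (one_add_rpow_neg_mem_Icc hτ (mul_div_one_sub_nonneg he hδ)).2)
    (rpow_nonneg hδ.1.le _)

lemma ffamDefect_nonneg (hτ : 0 ≤ τ) (he : 0 ≤ e) : 0 ≤ ffamDefect τ α e :=
  setIntegral_nonneg measurableSet_Ioo fun _ hδ => ffamDefect_integrand_nonneg hτ he hδ

lemma ffamDefect_integrand_le (hτ : 0 ≤ τ) (he : 0 ≤ e) {s : ℝ} (hs0 : 0 ≤ s) (hs1 : s ≤ 1)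
    (hδ : δ ∈ Ioo (0 : ℝ) 1) :
    (1 - (1 + δ * e / (1 - δ)) ^ (-τ)) * δ ^ (α - 1)
      ≤ τ ^ s * e ^ s * (δ ^ (α - 1) * (1 - δ) ^ (-s)) := by
  have h1 : 0 < 1 - δ := by linarith [hδ.2]
  have hx := mul_div_one_sub_nonneg he hδ
  have hxe : δ * e / (1 - δ) ≤ e / (1 - δ) :=
    div_le_div_of_nonneg_right (mul_le_of_le_one_left he hδ.2.le) h1.le
  have hkey : 1 - (1 + δ * e / (1 - δ)) ^ (-τ) ≤ τ ^ s * e ^ s * (1 - δ) ^ (-s) :=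
    calc 1 - (1 + δ * e / (1 - δ)) ^ (-τ) ≤ (τ * (δ * e / (1 - δ))) ^ s :=
          one_sub_one_add_rpow_neg_le_rpow hτ hx hs0 hs1
      _ ≤ (τ * (e / (1 - δ))) ^ s := by gcongr
      _ = τ ^ s * e ^ s * (1 - δ) ^ (-s) := by
          rw [mul_rpow hτ (by positivity), div_rpow he h1.le, rpow_neg h1.le]; ring
  calc (1 - (1 + δ * e / (1 - δ)) ^ (-τ)) * δ ^ (α - 1)
      ≤ τ ^ s * e ^ s * (1 - δ) ^ (-s) * δ ^ (α - 1) := by gcongr; exact rpow_nonneg hδ.1.le _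
    _ = τ ^ s * e ^ s * (δ ^ (α - 1) * (1 - δ) ^ (-s)) := by ring

lemma ffamDefect_le (hτ : 0 ≤ τ) (hα : 0 < α) {s : ℝ} (hs0 : 0 ≤ s) (hs1 : s < 1) :
    ∃ C, 0 ≤ C ∧ ∀ e, 0 ≤ e → ffamDefect τ α e ≤ C * e ^ s := by
  have hint : IntegrableOn (fun δ : ℝ => δ ^ (α - 1) * (1 - δ) ^ (-s)) (Ioo 0 1) :=
    integrableOn_rpow_mul_one_sub_rpow (by linarith) (by linarith)
  refine ⟨τ ^ s * ∫ δ in Ioo (0 : ℝ) 1, δ ^ (α - 1) * (1 - δ) ^ (-s),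
    mul_nonneg (rpow_nonneg hτ s) (setIntegral_nonneg measurableSet_Ioo fun δ hδ =>
      mul_nonneg (rpow_nonneg hδ.1.le _) (rpow_nonneg (by linarith [hδ.2]) _)), fun e he => ?_⟩
  calc ffamDefect τ α e
      ≤ ∫ δ in Ioo (0 : ℝ) 1, τ ^ s * e ^ s * (δ ^ (α - 1) * (1 - δ) ^ (-s)) := by
        refine integral_mono_of_nonneg ?_ (hint.const_mul _) ?_ <;>
          filter_upwards [ae_restrict_mem measurableSet_Ioo] with δ hδ
        exacts [ffamDefect_integrand_nonneg hτ he hδ,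
          ffamDefect_integrand_le hτ he hs0 hs1.le hδ]
    _ = _ := by rw [integral_const_mul]; ring

lemma ffamDefect_integrand_ge (hτ : 0 ≤ τ) (hα : 0 < α) (he : 0 < e)
    (hδ : δ ∈ Ioo (1 / 2 : ℝ) (1 - e)) :
    τ / (2 + τ) * (1 / 2) ^ α / 2 * e * (1 - δ)⁻¹
      ≤ (1 - (1 + δ * e / (1 - δ)) ^ (-τ)) * δ ^ (α - 1) := by
  obtain ⟨hδ0, hδe⟩ := hδ
  have h1 : 0 < 1 - δ := by linarith
  have hx0 : 0 ≤ δ * e / (1 - δ) := by positivity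
  have hx1 : δ * e / (1 - δ) ≤ 1 := by
    rw [div_le_one h1]; nlinarith
  have hx : e * (1 - δ)⁻¹ / 2 ≤ δ * e / (1 - δ) := by
    rw [← div_eq_mul_inv, div_div, div_le_div_iff₀ (by positivity) h1]
    nlinarith [mul_nonneg (mul_nonneg he.le h1.le) (by linarith : (0 : ℝ) ≤ 2 * δ - 1)]
  have hpow : (1 / 2 : ℝ) ^ α ≤ δ ^ (α - 1) :=
    calc (1 / 2 : ℝ) ^ α ≤ δ ^ α := by gcongr
      _ ≤ δ ^ (α - 1) := rpow_le_rpow_of_exponent_ge (by linarith) (by linarith) (by linarith)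
  calc τ / (2 + τ) * (1 / 2) ^ α / 2 * e * (1 - δ)⁻¹
      = τ / (2 + τ) * (e * (1 - δ)⁻¹ / 2) * (1 / 2) ^ α := by ring
    _ ≤ τ / (2 + τ) * (δ * e / (1 - δ)) * δ ^ (α - 1) :=
        mul_le_mul (mul_le_mul_of_nonneg_left hx (by positivity)) hpow (by positivity)
          (by positivity)
    _ ≤ (1 - (1 + δ * e / (1 - δ)) ^ (-τ)) * δ ^ (α - 1) := by
        gcongr
        exact mul_le_one_sub_one_add_rpow_neg hτ hx0 hx1

lemma ffamDefect_ge (hτ : 0 < τ) (hα : 0 < α) :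
    ∃ K, 0 < K ∧ ∀ e ∈ Ioo (0 : ℝ) (1 / 2), K * e * log (1 / 2 / e) ≤ ffamDefect τ α e := by
  set K := τ / (2 + τ) * (1 / 2) ^ α / 2
  refine ⟨K, by positivity, fun e ⟨he0, he⟩ => ?_⟩
  have hsub : Ioo (1 / 2 : ℝ) (1 - e) ⊆ Ioo 0 1 := Ioo_subset_Ioo (by norm_num) (by linarith)
  have hint := integrableOn_mul_rpow_sub_one hα (by fun_prop) fun δ hδ =>
    Icc.mem_iff_one_sub_mem.1 (one_add_rpow_neg_mem_Icc hτ.le (mul_div_one_sub_nonneg he0.le hδ))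
  have hcont : ContinuousOn (fun δ : ℝ => K * e * (1 - δ)⁻¹) (Icc (1 / 2) (1 - e)) :=
    continuousOn_const.mul <| (continuousOn_const.sub continuousOn_id).inv₀ fun δ hδ =>
      (show (0 : ℝ) < 1 - δ by linarith [hδ.2]).ne'
  calc K * e * log (1 / 2 / e) = ∫ δ in Ioo (1 / 2 : ℝ) (1 - e), K * e * (1 - δ)⁻¹ := by
        rw [integral_const_mul, setIntegral_Ioo_inv_one_sub he0 he.le]
    _ ≤ ∫ δ in Ioo (1 / 2 : ℝ) (1 - e), (1 - (1 + δ * e / (1 - δ)) ^ (-τ)) * δ ^ (α - 1) :=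
        setIntegral_mono_on (hcont.integrableOn_Icc.mono_set Ioo_subset_Icc_self)
          (hint.mono_set hsub) measurableSet_Ioo fun δ hδ =>
          ffamDefect_integrand_ge hτ.le hα he0 hδ
    _ ≤ ffamDefect τ α e := by
        refine setIntegral_mono_set hint ?_ hsub.eventuallyLE
        filter_upwards [ae_restrict_mem measurableSet_Ioo] with δ hδ
        exact ffamDefect_integrand_nonneg hτ.le he0.le hδ

lemma tendsto_ffamDefect_div_self (hτ : 0 < τ) (hα : 0 < α) :
    Tendsto (fun e => ffamDefect τ α e / e) (𝓝[>] 0) atTop := by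
  obtain ⟨K, hK, hle⟩ := ffamDefect_ge hτ hα
  have hlog : Tendsto (fun e : ℝ => log (1 / 2 / e)) (𝓝[>] 0) atTop := by
    simpa only [div_eq_mul_inv, Function.comp_def] using
      tendsto_log_atTop.comp <|
        tendsto_inv_nhdsGT_zero.const_mul_atTop (by norm_num : (0 : ℝ) < 1 / 2)
  refine tendsto_atTop_mono' _ ?_ (hlog.const_mul_atTop hK)
  filter_upwards [Ioo_mem_nhdsGT (by norm_num : (0 : ℝ) < 1 / 2)] with e he
  rw [le_div_iff₀ he.1]
  linarith [hle e he]

lemma Ffam_zero_sub_Ffam_le (hτ : 0 ≤ τ) (hα : 0 < α) {p : ℝ} (hp0 : 0 ≤ p) (hp : p < 2) :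
    ∃ C, ∀ θ, 0 < θ → Ffam τ α 1 0 - Ffam τ α 1 θ ≤ C * θ ^ p := by
  obtain ⟨C, hC0, hC⟩ := ffamDefect_le hτ hα (s := p / 2) (by positivity) (by linarith)
  refine ⟨α * C, fun θ hθ => ?_⟩
  have he : 0 ≤ 1 - cos θ := sub_nonneg.2 (cos_le_one θ)
  have heθ : 1 - cos θ ≤ θ ^ 2 := by nlinarith [one_sub_sq_div_two_le_cos (x := θ)]
  rw [Ffam_zero_sub_Ffam hτ hα]
  calc α * ffamDefect τ α (1 - cos θ) ≤ α * (C * (1 - cos θ) ^ (p / 2)) := by gcongr; exact hC _ he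
    _ ≤ α * (C * (θ ^ 2) ^ (p / 2)) := by gcongr
    _ = α * C * θ ^ p := by
        rw [← rpow_natCast, ← rpow_mul hθ.le, Nat.cast_ofNat, mul_div_cancel₀ p two_ne_zero,
          mul_assoc]

lemma tendsto_Ffam_zero_sub_Ffam_div_rpow (hτ : 0 ≤ τ) (hα : 0 < α) {a : ℝ} (ha0 : 0 ≤ a)
    (ha : a < 2) :
    Tendsto (fun θ => (Ffam τ α 1 0 - Ffam τ α 1 θ) / θ ^ a) (𝓝[>] 0) (𝓝 0) := by
  obtain ⟨C, hC⟩ := Ffam_zero_sub_Ffam_le hτ hα (p := (a + 2) / 2) (by positivity) (by linarith)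
  refine tendsto_div_rpow_nhdsGT_zero_of_le (by linarith) (fun θ _ => ?_) hC
  rw [Ffam_zero_sub_Ffam hτ hα]
  exact mul_nonneg hα.le (ffamDefect_nonneg hτ (sub_nonneg.2 (cos_le_one θ)))

lemma tendsto_Ffam_zero_sub_Ffam_div_sq (hτ : 0 < τ) (hα : 0 < α) :
    Tendsto (fun θ => (Ffam τ α 1 0 - Ffam τ α 1 θ) / θ ^ (2 : ℝ)) (𝓝[>] 0) atTop := by
  have hG := (tendsto_ffamDefect_div_self hτ hα).comp tendsto_one_sub_cos_nhdsGT_zero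
  refine tendsto_atTop_mono' _ ?_ (hG.const_mul_atTop (by positivity : 0 < α * (2 / π ^ 2)))
  filter_upwards [Ioo_mem_nhdsGT pi_pos] with θ hθ
  have hcos := cos_le_one_sub_mul_cos_sq (abs_le.2 ⟨by linarith [hθ.1, pi_pos], hθ.2.le⟩)
  have hθ2 : 0 < θ ^ 2 := by have := hθ.1; positivity
  set e := 1 - cos θ
  have he : 2 / π ^ 2 * θ ^ 2 ≤ e := by linarith
  have he0 : 0 < e := lt_of_lt_of_le (by positivity) he
  have hG0 : 0 ≤ ffamDefect τ α e / e := div_nonneg (ffamDefect_nonneg hτ.le he0.le) he0.le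
  rw [Function.comp_apply, Ffam_zero_sub_Ffam hτ.le hα, rpow_two]
  calc α * (2 / π ^ 2) * (ffamDefect τ α e / e)
      ≤ α * (ffamDefect τ α e / e) * (e / θ ^ 2) := by
        rw [mul_right_comm]
        exact mul_le_mul_of_nonneg_left ((le_div_iff₀ hθ2).2 he) (mul_nonneg hα.le hG0)
    _ = α * ffamDefect τ α e / θ ^ 2 := by field_simp

end Ffam

/-- For `ν = 1` the fractal index of the `F`-family does not exist: for no `a ∈ (0,2]`
does `(F(0)-F(θ))/θ^a` converge to a positive constant as `θ → 0⁺`; more precisely,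
the limit is `0` for `a ∈ (0,2)` and `+∞` for `a = 2`. -/
theorem Ffam_fractal_index_of_nu_eq_one (τ α : ℝ) (hτ : 0 < τ) (hα : 0 < α) :
    (∀ a ∈ Set.Ioc (0:ℝ) 2, ∀ b : ℝ, 0 < b →
      ¬ Filter.Tendsto (fun θ : ℝ => (Ffam τ α 1 0 - Ffam τ α 1 θ) / θ ^ a)
          (nhdsWithin 0 (Set.Ioi 0)) (nhds b)) ∧
    (∀ a ∈ Set.Ioo (0:ℝ) 2,
      Filter.Tendsto (fun θ : ℝ => (Ffam τ α 1 0 - Ffam τ α 1 θ) / θ ^ a)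
        (nhdsWithin 0 (Set.Ioi 0)) (nhds 0)) ∧
    Filter.Tendsto (fun θ : ℝ => (Ffam τ α 1 0 - Ffam τ α 1 θ) / θ ^ (2:ℝ))
      (nhdsWithin 0 (Set.Ioi 0)) Filter.atTop := by
  have hsub : ∀ a ∈ Ioo (0 : ℝ) 2, Tendsto (fun θ => (Ffam τ α 1 0 - Ffam τ α 1 θ) / θ ^ a)
      (𝓝[>] 0) (𝓝 0) := fun a ha =>
    tendsto_Ffam_zero_sub_Ffam_div_rpow hτ.le hα ha.1.le ha.2
  have hsq := tendsto_Ffam_zero_sub_Ffam_div_sq hτ hα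
  refine ⟨fun a ha b hb hlim => ?_, hsub, hsq⟩
  rcases ha.2.lt_or_eq with ha2 | rfl
  · exact hb.ne' (tendsto_nhds_unique hlim (hsub a ⟨ha.1, ha2⟩))
  · exact not_tendsto_nhds_of_tendsto_atTop hsq b hlim
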